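/- Let S be a local Artinian ring with residue field k, and let A• be a cochain complex of flat S-modules (not necessarily finitely generated). If the complex A• ⊗_S k is exact in all positive degrees, then A• is exact in all positive degrees. -/

import Mathlib

open TensorProduct

section Aux

variable {S : Type*} [CommRing S] {M : Type*} [AddCommGroup M] [Module S M]

private lemma aux_tmul_one_eq_zero_iff (I : Ideal S) (x : M) :
    x ⊗ₜ[S] (1 : S ⧸ I) = 0 ↔ x ∈ I • (⊤ : Submodule S M) := by
  have h1 : (1 : S ⧸ I) = Ideal.Quotient.mk I 1 := (map_one _).symm
  rw [h1, ← LinearEquiv.map_eq_zero_iff (TensorProduct.tensorQuotEquivQuotSMul M I),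
    TensorProduct.tensorQuotEquivQuotSMul_tmul_mk, one_smul, Submodule.Quotient.mk_eq_zero]

private lemma aux_one_tmul_eq_zero_iff (I : Ideal S) (x : M) :
    (1 : S ⧸ I) ⊗ₜ[S] x = 0 ↔ x ∈ I • (⊤ : Submodule S M) := by
  have h1 : (1 : S ⧸ I) = Ideal.Quotient.mk I 1 := (map_one _).symm
  rw [h1, ← LinearEquiv.map_eq_zero_iff (TensorProduct.quotTensorEquivQuotSMul M I),
    TensorProduct.quotTensorEquivQuotSMul_mk_tmul, one_smul, Submodule.Quotient.mk_eq_zero]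

private lemma aux_exists_tmul_one (I : Ideal S) (z : M ⊗[S] (S ⧸ I)) :
    ∃ x : M, z = x ⊗ₜ[S] (1 : S ⧸ I) := by
  induction z using TensorProduct.induction_on with
  | zero => exact ⟨0, (TensorProduct.zero_tmul _ _).symm⟩
  | tmul x q =>
    obtain ⟨s, rfl⟩ := Ideal.Quotient.mk_surjective q
    refine ⟨s • x, ?_⟩
    rw [smul_tmul]
    congr 1
    rw [show (1 : S ⧸ I) = Ideal.Quotient.mk I 1 from (map_one _).symm,
      ← Ideal.Quotient.mk_eq_mk, ← Ideal.Quotient.mk_eq_mk, ← Submodule.Quotient.mk_smul,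
      smul_eq_mul, mul_one]
  | add a b ha hb =>
    obtain ⟨x, rfl⟩ := ha
    obtain ⟨y, rfl⟩ := hb
    exact ⟨x + y, (TensorProduct.add_tmul _ _ _).symm⟩

private lemma aux_exists_of_mem_span_singleton_smul (v : S) (x : M)
    (h : x ∈ (Ideal.span {v} : Ideal S) • (⊤ : Submodule S M)) : ∃ a, x = v • a := by
  refine Submodule.smul_induction_on h ?_ ?_
  · intro r hr n _
    obtain ⟨c, rfl⟩ := Ideal.mem_span_singleton'.mp hr
    exact ⟨c • n, by rw [smul_smul, mul_comm]⟩
  · rintro x y ⟨a, rfl⟩ ⟨b, rfl⟩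
    exact ⟨a + b, (smul_add _ _ _).symm⟩

private lemma aux_smul_mem_mul_smul_top (J : Ideal S) {x : M}
    (h : x ∈ J • (⊤ : Submodule S M)) (r : S) :
    r • x ∈ (Ideal.span {r} * J) • (⊤ : Submodule S M) := by
  refine Submodule.smul_induction_on h ?_ ?_
  · intro c hc n _
    rw [smul_smul]
    exact Submodule.smul_mem_smul (Ideal.mul_mem_mul (Ideal.subset_span rfl) hc) trivial
  · intro a b ha hb
    rw [smul_add]
    exact add_mem ha hb

private lemma aux_exists_fg (I : Ideal S) (x : M) (h : x ∈ I • (⊤ : Submodule S M)) :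
    ∃ T : Finset S, (↑T : Set S) ⊆ (I : Set S) ∧
      x ∈ (Ideal.span (↑T : Set S)) • (⊤ : Submodule S M) := by
  classical
  refine Submodule.smul_induction_on h ?_ ?_
  · intro r hr n _
    refine ⟨{r}, by simpa using hr, ?_⟩
    simp only [Finset.coe_singleton]
    exact Submodule.smul_mem_smul (Ideal.subset_span rfl) trivial
  · rintro x y ⟨T, hT, hx⟩ ⟨U, hU, hy⟩
    refine ⟨T ∪ U, by rw [Finset.coe_union]; exact Set.union_subset hT hU, ?_⟩
    have h1 : Ideal.span (↑T : Set S) ≤ Ideal.span (↑(T ∪ U) : Set S) :=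
      Ideal.span_mono (by rw [Finset.coe_union]; exact Set.subset_union_left)
    have h2 : Ideal.span (↑U : Set S) ≤ Ideal.span (↑(T ∪ U) : Set S) :=
      Ideal.span_mono (by rw [Finset.coe_union]; exact Set.subset_union_right)
    exact add_mem (Submodule.smul_mono_left h1 hx) (Submodule.smul_mono_left h2 hy)

/-- Key flatness input: a colon-ideal version of "torsion commutes with flat base change". -/
private lemma aux_mem_colon_smul_top_of_smul_mem [Module.Flat S M]
    (I : Ideal S) (v : S) (a : M) (h : v • a ∈ I • (⊤ : Submodule S M)) :
    a ∈ (I.colon (Ideal.span {v})) • (⊤ : Submodule S M) := by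
  set J := I.colon (Ideal.span {v}) with hJ
  let g : S →ₗ[S] (S ⧸ I) := (Submodule.mkQ (I : Submodule S S)) ∘ₗ (LinearMap.lsmul S S v)
  have hex : Function.Exact (Submodule.subtype (J : Submodule S S)) g := by
    rw [LinearMap.exact_iff, Submodule.range_subtype]
    ext s
    simp only [g, LinearMap.mem_ker, LinearMap.coe_comp, Function.comp_apply,
      LinearMap.lsmul_apply, Submodule.mkQ_apply, Submodule.Quotient.mk_eq_zero]
    rw [hJ, Ideal.mem_colon_span_singleton, smul_eq_mul, mul_comm]
  have hT := Module.Flat.rTensor_exact M hex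
  have h0 : (LinearMap.rTensor M g) ((1 : S) ⊗ₜ[S] a) = 0 := by
    rw [LinearMap.rTensor_tmul]
    have hg1 : g 1 = Submodule.Quotient.mk v := by
      simp only [g, LinearMap.coe_comp, Function.comp_apply, LinearMap.lsmul_apply,
        Submodule.mkQ_apply, smul_eq_mul, mul_one]
    rw [hg1]
    have hmkv : (Submodule.Quotient.mk v : S ⧸ (I : Submodule S S)) = v • (1 : S ⧸ I) := by
      have h1 : (1 : S ⧸ I) = Submodule.Quotient.mk (1 : S) :=
        ((map_one (Ideal.Quotient.mk I)).symm).trans (Ideal.Quotient.mk_eq_mk 1).symm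
      rw [h1, ← Submodule.Quotient.mk_smul, smul_eq_mul, mul_one]
    rw [hmkv, smul_tmul]
    exact (aux_one_tmul_eq_zero_iff I _).mpr h
  obtain ⟨w, hw⟩ := (hT _).mp h0
  have ha : a = TensorProduct.lid S M ((1 : S) ⊗ₜ[S] a) := by simp
  rw [ha, ← hw]
  clear hw ha h0
  induction w using TensorProduct.induction_on with
  | zero => simp
  | tmul j b =>
    rw [LinearMap.rTensor_tmul, Submodule.coe_subtype, TensorProduct.lid_tmul]
    exact Submodule.smul_mem_smul j.2 trivial
  | add u w hu hw =>
    rw [map_add, map_add]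
    exact add_mem hu hw

/-- Nakayama-type lemma for a nilpotent ideal (no finiteness needed). -/
private lemma aux_nakayama (m : Ideal S) {n : ℕ} (hm : m ^ n = ⊥) (I J : Ideal S)
    (h : I ≤ J ⊔ m * I) : I ≤ J := by
  have key : ∀ s : ℕ, I ≤ J ⊔ m ^ s * I := by
    intro s
    induction s with
    | zero => rw [pow_zero, one_mul]; exact le_sup_right
    | succ s ih =>
      refine ih.trans (sup_le le_sup_left ?_)
      refine (Ideal.mul_mono_right h).trans ?_
      rw [Ideal.mul_sup]
      refine sup_le (Ideal.mul_le_right.trans le_sup_left) ?_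
      rw [← mul_assoc, ← pow_succ]
      exact le_sup_right
  refine (key n).trans (sup_le le_rfl ?_)
  rw [hm]
  exact Ideal.mul_le_left.trans bot_le

end Aux

/-- Lemma 5.2: Let `S` be a local Artinian ring with residue field `k`
and let `A•` be a cochain complex of flat `S`-modules (not necessarily finitely
generated). If `A• ⊗_S k` is exact in all positive degrees, then so is `A•`. -/
theorem flat_complex_exact_of_residue_exact
    (S : Type*) [CommRing S] [IsLocalRing S] [IsArtinianRing S]
    (A : ℕ → Type*) [∀ i, AddCommGroup (A i)] [∀ i, Module S (A i)]
    [∀ i, Module.Flat S (A i)]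
    (d : ∀ i, A i →ₗ[S] A (i + 1))
    (hdd : ∀ i, (d (i + 1)).comp (d i) = 0)
    (hexact : ∀ i, Function.Exact
      (LinearMap.rTensor (IsLocalRing.ResidueField S) (d i))
      (LinearMap.rTensor (IsLocalRing.ResidueField S) (d (i + 1)))) :
    ∀ i, Function.Exact (d i) (d (i + 1)) := by
  classical
  set m : Ideal S := IsLocalRing.maximalIdeal S with hmdef
  obtain ⟨n, hn⟩ : ∃ n : ℕ, m ^ n = ⊥ := by
    obtain ⟨n, hn⟩ := IsArtinianRing.isNilpotent_jacobson_bot (R := S)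
    exact ⟨n, by rwa [IsLocalRing.jacobson_eq_maximalIdeal ⊥ bot_ne_top] at hn⟩
  -- Step A : lifting along the residue-field exactness
  have lift : ∀ (j : ℕ) (a : A (j + 1)), d (j + 1) a ∈ m • (⊤ : Submodule S (A (j + 2))) →
      ∃ b : A j, a - d j b ∈ m • (⊤ : Submodule S (A (j + 1))) := by
    intro j a ha
    have h0 : LinearMap.rTensor (IsLocalRing.ResidueField S) (d (j + 1))
        (a ⊗ₜ (1 : IsLocalRing.ResidueField S)) = 0 := by
      rw [LinearMap.rTensor_tmul]
      exact (aux_tmul_one_eq_zero_iff m _).mpr ha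
    obtain ⟨z, hz⟩ := (hexact j _).mp h0
    obtain ⟨b, rfl⟩ := aux_exists_tmul_one (M := A j) m z
    erw [LinearMap.rTensor_tmul] at hz
    have hsub : (a - d j b) ⊗ₜ[S] (1 : S ⧸ m) = 0 := by
      rw [TensorProduct.sub_tmul]
      erw [hz, sub_self]
    exact ⟨b, (aux_tmul_one_eq_zero_iff m _).mp hsub⟩
  -- main induction over ideals
  have key : ∀ I : Ideal S, ∀ (j : ℕ) (x : A (j + 1)),
      x ∈ I • (⊤ : Submodule S (A (j + 1))) → d (j + 1) x = 0 → ∃ y, d j y = x := by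
    intro I
    induction I using IsArtinian.induction with
    | _ I IH =>
    intro j x hx hdx
    obtain ⟨T, hTI, hxT⟩ := aux_exists_fg I x hx
    clear hx
    have inner : ∀ T : Finset S, (↑T : Set S) ⊆ (I : Set S) → ∀ x : A (j + 1),
        x ∈ (Ideal.span (↑T : Set S)) • (⊤ : Submodule S (A (j + 1))) →
        d (j + 1) x = 0 → ∃ y, d j y = x := by
      intro T
      induction T using Finset.induction_on with
      | empty =>
        intro _ x hx _
        rw [Finset.coe_empty, Ideal.span_empty, Submodule.bot_smul, Submodule.mem_bot] at hx
        exact ⟨0, by rw [map_zero, hx]⟩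
      | @insert v T hvT ihT =>
        intro hsub x hx hdx
        have hvI : v ∈ I := hsub (Finset.mem_insert_self v T)
        have hTsub : (↑T : Set S) ⊆ (I : Set S) :=
          fun s hs => hsub (Finset.mem_insert_of_mem hs)
        rw [Finset.coe_insert, Ideal.span_insert] at hx
        by_cases hvJ : v ∈ Ideal.span (↑T : Set S)
        · have heq : Ideal.span {v} ⊔ Ideal.span (↑T : Set S) = Ideal.span (↑T : Set S) :=
            sup_eq_right.mpr (Ideal.span_le.mpr (Set.singleton_subset_iff.mpr hvJ))
          rw [heq] at hx
          exact ihT hTsub x hx hdx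
        · rw [Submodule.sup_smul] at hx
          obtain ⟨x₁, hx₁, x₀, hx₀, rfl⟩ := Submodule.mem_sup.mp hx
          obtain ⟨a, rfl⟩ := aux_exists_of_mem_span_singleton_smul v x₁ hx₁
          -- d a lands in (span T : v) • ⊤ hence in m • ⊤
          have hdx₀ : d (j + 1) x₀ ∈
              Ideal.span (↑T : Set S) • (⊤ : Submodule S (A (j + 2))) := by
            have hmap : (Ideal.span (↑T : Set S) • (⊤ : Submodule S (A (j + 1)))).map
                (d (j + 1)) ≤ Ideal.span (↑T : Set S) • (⊤ : Submodule S (A (j + 2))) := by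
              rw [Submodule.map_smul'']
              exact Submodule.smul_mono le_rfl le_top
            exact hmap (Submodule.mem_map_of_mem hx₀)
          have hvda : v • d (j + 1) a ∈
              Ideal.span (↑T : Set S) • (⊤ : Submodule S (A (j + 2))) := by
            have : v • d (j + 1) a = -(d (j + 1) x₀) := by
              rw [← map_smul]
              refine eq_neg_of_add_eq_zero_left ?_
              rw [← map_add]
              exact hdx
            rw [this]
            exact neg_mem hdx₀
          have hcol := aux_mem_colon_smul_top_of_smul_mem
            (Ideal.span (↑T : Set S)) v (d (j + 1) a) hvda
          have hle : (Ideal.span (↑T : Set S)).colon (Ideal.span {v}) ≤ m := by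
            refine IsLocalRing.le_maximalIdeal ?_
            intro hTop
            refine hvJ ?_
            have h1 : (1 : S) ∈ (Ideal.span (↑T : Set S)).colon (Ideal.span {v}) := by
              rw [hTop]; trivial
            simpa using Ideal.mem_colon_span_singleton.mp h1
          have hdam : d (j + 1) a ∈ m • (⊤ : Submodule S (A (j + 2))) :=
            Submodule.smul_mono_left hle hcol
          obtain ⟨b, hb⟩ := lift j a hdam
          set a' := a - d j b with ha'
          have hxeq : v • a + x₀ = (x₀ + v • a') + d j (v • b) := by
            rw [ha', smul_sub, map_smul]
            abel
          have hx' : (x₀ + v • a') ∈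
              (Ideal.span (↑T : Set S) ⊔ m * I) • (⊤ : Submodule S (A (j + 1))) := by
            rw [Submodule.sup_smul]
            refine add_mem (Submodule.mem_sup_left hx₀) (Submodule.mem_sup_right ?_)
            have h1 := aux_smul_mem_mul_smul_top m hb v
            refine Submodule.smul_mono_left ?_ h1
            calc Ideal.span {v} * m ≤ I * m :=
                  Ideal.mul_mono_left (Ideal.span_le.mpr (Set.singleton_subset_iff.mpr hvI))
              _ = m * I := mul_comm _ _
          have hdx' : d (j + 1) (x₀ + v • a') = 0 := by
            have h2 : d (j + 1) (d j (v • b)) = 0 := by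
              have := LinearMap.ext_iff.mp (hdd j) (v • b)
              simpa using this
            have h4 : x₀ + v • a' = (v • a + x₀) - d j (v • b) := by
              rw [hxeq]; abel
            rw [h4, map_sub, hdx, h2, sub_zero]
          obtain ⟨T', hT', hxT'⟩ := aux_exists_fg _ _ hx'
          have hKlt : Ideal.span (↑T' : Set S) < I := by
            have hKle : Ideal.span (↑T' : Set S) ≤ Ideal.span (↑T : Set S) ⊔ m * I :=
              Ideal.span_le.mpr hT'
            have hKleI : Ideal.span (↑T' : Set S) ≤ I :=
              hKle.trans (sup_le (Ideal.span_le.mpr hTsub) Ideal.mul_le_right)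
            refine lt_of_le_of_ne hKleI ?_
            intro hKI
            refine hvJ ?_
            have hII : I ≤ Ideal.span (↑T : Set S) ⊔ m * I := hKI ▸ hKle
            exact aux_nakayama m hn I _ hII hvI
          obtain ⟨y, hy⟩ := IH _ hKlt j _ hxT' hdx'
          refine ⟨y + v • b, ?_⟩
          rw [map_add, hy, hxeq]
    exact inner T hTI x hxT hdx
  intro i x
  constructor
  · intro h
    obtain ⟨y, hy⟩ := key ⊤ i x (by rw [Submodule.top_smul]; trivial) h
    exact ⟨y, hy⟩
  · rintro ⟨y, rfl⟩
    have := LinearMap.ext_iff.mp (hdd i) y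
    simpa using this
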